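/- Let 0 < α < 2 and γ ∈ (0, 1/α + 1/2). Suppose p: (−R,R)×(−R,R) → [0,∞) satisfies, for fixed s ∈ (0,1), the pointwise bounds p(y,x) ≤ C₀ min((R−x)^{α/2} s^{−1/2}, 1) · min(s^{−1/α}, s/|y−x|^{1+α}) for all x, y ∈ (−R,R). Then there is a constant C depending only on α, γ, C₀ such that for every y ∈ (−R, R), ∫_{−R}^{R} p(y,x) (R−x)^{−γα} dx ≤ C (R − y + s^{1/α})^{−γα}. -/

import Mathlib

/-!
Write `t = s^(1/α)`, `δ = R - y` and `D = δ + t`, so that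
`p(y,x) ≤ C₀ min(((R-x)/t)^(α/2), 1) k_t(y-x)` with `k_t(u) = min(t⁻¹, t^α/|u|^(1+α))`.
On the boundary layer `R - x ≤ D/2` either `t ≳ D` or `|y - x| ≳ D`, so `k_t(y-x) ≲ t^α D^(-1-α)`
and the integrand is `≲ D^(-1-α/2) (R-x)^(α/2-γα)`. This power is integrable at `R` precisely
because `γα < 1 + α/2`, and its integral over the layer is `≲ D^(-γα)`. Off the layer the weight
is at most `(D/2)^(-γα)`, while `∫ k_t ≤ 2 + 2/α` uniformly in `t`.
-/

open MeasureTheory Set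

theorem integrable_comp_abs {E : Type*} [NormedAddCommGroup E] {f : ℝ → E}
    (hf : IntegrableOn f (Ioi 0)) : Integrable (fun x => f |x|) := by
  have hIoi : IntegrableOn (fun x => f |x|) (Ioi 0) :=
    hf.congr_fun (fun x hx => by rw [abs_of_pos (mem_Ioi.1 hx)]) measurableSet_Ioi
  have hIic : IntegrableOn (fun x => f |x|) (Iic 0) := by
    have hneg : MeasurableEmbedding fun x : ℝ => -x := (Homeomorph.neg ℝ).measurableEmbedding
    rw [← Measure.map_neg_eq_self (volume : Measure ℝ), hneg.integrableOn_map_iff]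
    simp_rw [Function.comp_def, abs_neg, neg_preimage, neg_Iic, neg_zero]
    exact Iff.mpr integrableOn_Ici_iff_integrableOn_Ioi hIoi
  rw [← integrableOn_univ, ← Iic_union_Ioi (a := (0 : ℝ))]
  exact hIic.union hIoi

theorem integrableOn_Ioc_rpow {r : ℝ} (hr : -1 < r) {c : ℝ} (hc : 0 ≤ c) :
    IntegrableOn (fun d : ℝ => d ^ r) (Ioc 0 c) :=
  (intervalIntegrable_iff_integrableOn_Ioc_of_le hc).1
    (intervalIntegral.intervalIntegrable_rpow' hr)

theorem setIntegral_le_integral_of_ae_le_comp_sub_left {f g : ℝ → ℝ} {S : Set ℝ} {c : ℝ}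
    (hg : Integrable g) (hg_nonneg : 0 ≤ g) (hf_nonneg : 0 ≤ᵐ[volume.restrict S] f)
    (hfg : f ≤ᵐ[volume.restrict S] fun x => g (c - x)) :
    ∫ x in S, f x ≤ ∫ x, g x :=
  calc ∫ x in S, f x ≤ ∫ x in S, g (c - x) :=
        integral_mono_of_nonneg hf_nonneg (hg.comp_sub_left c).integrableOn hfg
    _ ≤ ∫ x, g (c - x) :=
        setIntegral_le_integral (hg.comp_sub_left c)
          (Filter.Eventually.of_forall fun x => hg_nonneg (c - x))
    _ = ∫ x, g x := integral_sub_left_eq_self g volume c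

/-- The two-sided estimate of the symmetric `α`-stable transition density at time `t ^ α`. -/
noncomputable def stableKernelBound (α t u : ℝ) : ℝ := min t⁻¹ (t ^ α / |u| ^ (1 + α))

section StableKernelBound

variable {α t : ℝ}

theorem stableKernelBound_nonneg (ht : 0 ≤ t) (u : ℝ) : 0 ≤ stableKernelBound α t u :=
  le_min (inv_nonneg.2 ht) (by positivity)

theorem measurable_stableKernelBound : Measurable (stableKernelBound α t) := by
  unfold stableKernelBound; fun_prop

theorem stableKernelBound_abs (u : ℝ) : stableKernelBound α t |u| = stableKernelBound α t u := by
  simp only [stableKernelBound, abs_abs]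

theorem stableKernelBound_le_of_le_max (hα : 0 < α) (ht : 0 < t) {c u : ℝ} (hc : 0 < c)
    (hcu : c ≤ max t |u|) : stableKernelBound α t u ≤ t ^ α / c ^ (1 + α) := by
  rcases le_max_iff.1 hcu with h | h
  · calc stableKernelBound α t u ≤ t⁻¹ := min_le_left _ _
      _ = t ^ α / t ^ (1 + α) := by
          rw [Real.rpow_add ht, Real.rpow_one]; field_simp
      _ ≤ t ^ α / c ^ (1 + α) := by gcongr
  · calc stableKernelBound α t u ≤ t ^ α / |u| ^ (1 + α) := min_le_right _ _
      _ ≤ t ^ α / c ^ (1 + α) := by gcongr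

theorem stableKernelBound_le_rpow {u : ℝ} (hu : 0 < u) :
    stableKernelBound α t u ≤ t ^ α * u ^ (-(1 + α)) := by
  rw [Real.rpow_neg hu.le, ← div_eq_mul_inv, stableKernelBound]
  simpa only [abs_of_pos hu] using min_le_right t⁻¹ (t ^ α / |u| ^ (1 + α))

theorem integrableOn_Ioi_stableKernelBound (hα : 0 < α) (ht : 0 < t) :
    IntegrableOn (stableKernelBound α t) (Ioi 0) := by
  rw [← Ioc_union_Ioi_eq_Ioi ht.le]
  refine IntegrableOn.union ?_ ?_
  · refine Measure.integrableOn_of_bounded (M := t⁻¹) measure_Ioc_lt_top.ne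
      measurable_stableKernelBound.aestronglyMeasurable (Filter.Eventually.of_forall fun u => ?_)
    rw [Real.norm_of_nonneg (stableKernelBound_nonneg ht.le u)]
    exact min_le_left _ _
  · refine ((integrableOn_Ioi_rpow_of_lt (a := -(1 + α)) (by linarith) ht).const_mul
      (t ^ α)).mono' measurable_stableKernelBound.aestronglyMeasurable ?_
    filter_upwards [ae_restrict_mem measurableSet_Ioi] with u hu
    rw [Real.norm_of_nonneg (stableKernelBound_nonneg ht.le u)]
    exact stableKernelBound_le_rpow (ht.trans hu)

theorem setIntegral_Ioi_stableKernelBound_le (hα : 0 < α) (ht : 0 < t) :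
    ∫ u in Ioi 0, stableKernelBound α t u ≤ 1 + 1 / α := by
  have hint := integrableOn_Ioi_stableKernelBound hα ht
  rw [← Ioc_union_Ioi_eq_Ioi ht.le] at hint ⊢
  rw [setIntegral_union Ioc_disjoint_Ioi_same measurableSet_Ioi
    (hint.mono_set subset_union_left) (hint.mono_set subset_union_right)]
  gcongr
  · calc ∫ u in Ioc 0 t, stableKernelBound α t u ≤ ∫ _ in Ioc 0 t, t⁻¹ :=
          setIntegral_mono_on (hint.mono_set subset_union_left)
            (integrableOn_const measure_Ioc_lt_top.ne) measurableSet_Ioc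
            fun u _ => min_le_left _ _
      _ = 1 := by
          rw [setIntegral_const, smul_eq_mul, Real.volume_real_Ioc_of_le ht.le, sub_zero,
            mul_inv_cancel₀ ht.ne']
  · calc ∫ u in Ioi t, stableKernelBound α t u ≤ ∫ u in Ioi t, t ^ α * u ^ (-(1 + α)) :=
          setIntegral_mono_on (hint.mono_set subset_union_right)
            ((integrableOn_Ioi_rpow_of_lt (a := -(1 + α)) (by linarith) ht).const_mul _)
            measurableSet_Ioi
            fun u hu => stableKernelBound_le_rpow (ht.trans hu)
      _ = 1 / α := by
          rw [integral_const_mul, integral_Ioi_rpow_of_lt (by linarith) ht,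
            show -(1 + α) + 1 = -α by ring, Real.rpow_neg ht.le]
          field_simp

theorem integrable_stableKernelBound (hα : 0 < α) (ht : 0 < t) :
    Integrable (stableKernelBound α t) := by
  simpa only [stableKernelBound_abs] using
    integrable_comp_abs (integrableOn_Ioi_stableKernelBound hα ht)

theorem integral_stableKernelBound_le (hα : 0 < α) (ht : 0 < t) :
    ∫ u, stableKernelBound α t u ≤ 2 + 2 / α := by
  have h := integral_comp_abs (f := stableKernelBound α t)
  simp only [stableKernelBound_abs] at h
  rw [h, show 2 + 2 / α = 2 * (1 + 1 / α) by ring]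
  gcongr
  exact setIntegral_Ioi_stableKernelBound_le hα ht

end StableKernelBound

noncomputable def boundaryMajorant (α γ t δ d : ℝ) : ℝ :=
  (Ioc 0 ((δ + t) / 2)).indicator
      (fun d => 4 ^ (1 + α) * (δ + t) ^ (-(1 + α / 2)) * d ^ (α / 2 - γ * α)) d
    + ((δ + t) / 2) ^ (-(γ * α)) * stableKernelBound α t (d - δ)

section BoundaryMajorant

variable {α γ t δ : ℝ}

theorem boundaryMajorant_nonneg (ht : 0 < t) (hδ : 0 < δ) (d : ℝ) :
    0 ≤ boundaryMajorant α γ t δ d := by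
  refine add_nonneg (indicator_nonneg (fun d hd => ?_) d)
    (mul_nonneg (by positivity) (stableKernelBound_nonneg ht.le _))
  have : 0 < d := hd.1
  positivity

theorem stableKernelBound_boundaryLayer_le (hα : 0 < α) (ht : 0 < t) (hδ : 0 < δ) {d : ℝ}
    (hd : d ≤ (δ + t) / 2) :
    stableKernelBound α t (d - δ) ≤ t ^ α / ((δ + t) / 4) ^ (1 + α) := by
  refine stableKernelBound_le_of_le_max hα ht (by linarith) ?_
  rw [le_max_iff, abs_sub_comm]
  by_contra! h
  linarith [le_abs_self (δ - d)]

theorem le_boundaryMajorant (hα : 0 < α) (hγ : 0 ≤ γ) (ht : 0 < t) (hδ : 0 < δ) {d : ℝ}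
    (hd : 0 < d) :
    min (d ^ (α / 2) / t ^ (α / 2)) 1 * stableKernelBound α t (d - δ) * d ^ (-(γ * α))
      ≤ boundaryMajorant α γ t δ d := by
  have hD : 0 < δ + t := by linarith
  have hk := stableKernelBound_nonneg (α := α) ht.le (d - δ)
  rcases le_or_gt d ((δ + t) / 2) with hnear | hfar
  · refine le_add_of_le_of_nonneg ?_ (mul_nonneg (by positivity) hk)
    rw [indicator_of_mem (show d ∈ Ioc 0 ((δ + t) / 2) from ⟨hd, hnear⟩)]
    calc min (d ^ (α / 2) / t ^ (α / 2)) 1 * stableKernelBound α t (d - δ) * d ^ (-(γ * α))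
        ≤ d ^ (α / 2) / t ^ (α / 2) * (t ^ α / ((δ + t) / 4) ^ (1 + α)) * d ^ (-(γ * α)) := by
          gcongr
          · exact min_le_left _ _
          · exact stableKernelBound_boundaryLayer_le hα ht hδ hnear
      _ = 4 ^ (1 + α) * (t ^ (α / 2) * (δ + t) ^ (-(1 + α))) * d ^ (α / 2 - γ * α) := by
          have ht2 : t ^ α = t ^ (α / 2) * t ^ (α / 2) := by
            rw [← Real.rpow_add ht, add_halves]
          rw [ht2, Real.div_rpow hD.le (by norm_num), Real.rpow_neg hD.le, sub_eq_add_neg,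
            Real.rpow_add hd]
          have : t ^ (α / 2) ≠ 0 := by positivity
          field_simp
      _ ≤ 4 ^ (1 + α) * ((δ + t) ^ (α / 2) * (δ + t) ^ (-(1 + α))) * d ^ (α / 2 - γ * α) := by
          gcongr
          linarith
      _ = 4 ^ (1 + α) * (δ + t) ^ (-(1 + α / 2)) * d ^ (α / 2 - γ * α) := by
          rw [← Real.rpow_add hD]
          ring_nf
  · refine le_add_of_nonneg_of_le (indicator_nonneg (fun d hd => ?_) d) ?_
    · have : 0 < d := hd.1
      positivity
    calc min (d ^ (α / 2) / t ^ (α / 2)) 1 * stableKernelBound α t (d - δ) * d ^ (-(γ * α))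
        ≤ 1 * stableKernelBound α t (d - δ) * ((δ + t) / 2) ^ (-(γ * α)) := by
          refine mul_le_mul (mul_le_mul_of_nonneg_right (min_le_right _ _) hk) ?_
            (by positivity) (by positivity)
          exact Real.rpow_le_rpow_of_nonpos (by positivity) hfar.le (neg_nonpos.2 (by positivity))
      _ = ((δ + t) / 2) ^ (-(γ * α)) * stableKernelBound α t (d - δ) := by ring

theorem boundaryMajorant_integrable_and_integral_le (hα : 0 < α) (hγ : γ * α < 1 + α / 2)
    (ht : 0 < t) (hδ : 0 < δ) :
    Integrable (boundaryMajorant α γ t δ) ∧ ∫ d, boundaryMajorant α γ t δ d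
      ≤ (4 ^ (1 + α) / (1 + α / 2 - γ * α) + 2 ^ (γ * α) * (2 + 2 / α))
        * (δ + t) ^ (-(γ * α)) := by
  have hD : 0 < δ + t := by linarith
  have hβ : 0 < α / 2 - γ * α + 1 := by linarith
  have hlayer_int : Integrable ((Ioc 0 ((δ + t) / 2)).indicator
      fun d => 4 ^ (1 + α) * (δ + t) ^ (-(1 + α / 2)) * d ^ (α / 2 - γ * α)) := by
    rw [integrable_indicator_iff measurableSet_Ioc]
    exact (integrableOn_Ioc_rpow (by linarith) (by positivity)).const_mul _
  have hkernel_int :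
      Integrable fun d => ((δ + t) / 2) ^ (-(γ * α)) * stableKernelBound α t (d - δ) :=
    ((integrable_stableKernelBound hα ht).comp_sub_right δ).const_mul _
  refine ⟨hlayer_int.add hkernel_int, ?_⟩
  have hlayer : ∫ d in Ioc 0 ((δ + t) / 2), d ^ (α / 2 - γ * α)
      = ((δ + t) / 2) ^ (α / 2 - γ * α + 1) / (α / 2 - γ * α + 1) := by
    rw [← intervalIntegral.integral_of_le (by positivity), integral_rpow (Or.inl (by linarith)),
      Real.zero_rpow hβ.ne', sub_zero]
  have hlayer_pow : (δ + t) ^ (-(1 + α / 2)) * ((δ + t) / 2) ^ (α / 2 - γ * α + 1)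
      ≤ (δ + t) ^ (-(γ * α)) :=
    calc (δ + t) ^ (-(1 + α / 2)) * ((δ + t) / 2) ^ (α / 2 - γ * α + 1)
        ≤ (δ + t) ^ (-(1 + α / 2)) * (δ + t) ^ (α / 2 - γ * α + 1) := by
          gcongr
          linarith
      _ = (δ + t) ^ (-(γ * α)) := by rw [← Real.rpow_add hD]; ring_nf
  have hhalf_pow : ((δ + t) / 2) ^ (-(γ * α)) = 2 ^ (γ * α) * (δ + t) ^ (-(γ * α)) := by
    rw [Real.div_rpow hD.le (by norm_num), Real.rpow_neg (by norm_num : (0 : ℝ) ≤ 2)]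
    field_simp
  unfold boundaryMajorant
  rw [integral_add hlayer_int hkernel_int, integral_indicator measurableSet_Ioc,
    integral_const_mul, hlayer, integral_const_mul, integral_sub_right_eq_self, hhalf_pow]
  calc 4 ^ (1 + α) * (δ + t) ^ (-(1 + α / 2))
        * (((δ + t) / 2) ^ (α / 2 - γ * α + 1) / (α / 2 - γ * α + 1))
        + 2 ^ (γ * α) * (δ + t) ^ (-(γ * α)) * ∫ u, stableKernelBound α t u
      = 4 ^ (1 + α) / (α / 2 - γ * α + 1)
          * ((δ + t) ^ (-(1 + α / 2)) * ((δ + t) / 2) ^ (α / 2 - γ * α + 1))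
        + 2 ^ (γ * α) * (δ + t) ^ (-(γ * α)) * ∫ u, stableKernelBound α t u := by ring
    _ ≤ 4 ^ (1 + α) / (α / 2 - γ * α + 1) * (δ + t) ^ (-(γ * α))
        + 2 ^ (γ * α) * (δ + t) ^ (-(γ * α)) * (2 + 2 / α) := by
      gcongr
      exact integral_stableKernelBound_le hα ht
    _ = _ := by ring

end BoundaryMajorant

theorem le_mul_stableKernelBound {α s c q u : ℝ} (hα : 0 < α) (hs : 0 < s)
    (h₁ : q ≤ c * s ^ (-(1 / α))) (h₂ : q ≤ c * (s / |u| ^ (1 + α))) :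
    q ≤ c * stableKernelBound α (s ^ (1 / α)) u := by
  have hinv : (s ^ (1 / α))⁻¹ = s ^ (-(1 / α)) := (Real.rpow_neg hs.le _).symm
  have hpow : (s ^ (1 / α)) ^ α = s := by
    rw [one_div, Real.rpow_inv_rpow hs.le hα.ne']
  rcases min_choice (s ^ (1 / α))⁻¹ ((s ^ (1 / α)) ^ α / |u| ^ (1 + α)) with h | h <;>
    rw [stableKernelBound, h]
  · rwa [hinv]
  · rwa [hpow]

theorem mul_rpow_le_boundaryMajorant {α γ C₀ R s x y q : ℝ} (hα : 0 < α) (hγ : 0 ≤ γ)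
    (hC₀ : 0 ≤ C₀) (hs : 0 < s) (hxR : x < R) (hyR : y < R)
    (h₁ : q ≤ C₀ * min ((R - x) ^ (α / 2) / √s) 1 * s ^ (-(1 / α)))
    (h₂ : q ≤ C₀ * min ((R - x) ^ (α / 2) / √s) 1 * (s / |y - x| ^ (1 + α))) :
    q * (R - x) ^ (-(γ * α)) ≤ C₀ * boundaryMajorant α γ (s ^ (1 / α)) (R - y) (R - x) := by
  have hsqrt : √s = (s ^ (1 / α)) ^ (α / 2) := by
    rw [Real.sqrt_eq_rpow, ← Real.rpow_mul hs.le]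
    field_simp
  have hker := le_mul_stableKernelBound hα hs h₁ h₂
  have hM := le_boundaryMajorant (t := s ^ (1 / α)) hα hγ (by positivity) (sub_pos.2 hyR)
    (sub_pos.2 hxR)
  rw [hsqrt] at hker
  rw [sub_sub_sub_cancel_left] at hM
  calc q * (R - x) ^ (-(γ * α))
      ≤ C₀ * min ((R - x) ^ (α / 2) / (s ^ (1 / α)) ^ (α / 2)) 1
          * stableKernelBound α (s ^ (1 / α)) (y - x) * (R - x) ^ (-(γ * α)) :=
        mul_le_mul_of_nonneg_right hker (Real.rpow_nonneg (sub_nonneg.2 hxR.le) _)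
    _ ≤ C₀ * boundaryMajorant α γ (s ^ (1 / α)) (R - y) (R - x) := by
        simpa only [mul_assoc] using mul_le_mul_of_nonneg_left hM hC₀

theorem stmt13_general (α γ C₀ : ℝ) (hα : 0 < α)
    (hγ : 0 < γ) (hγ' : γ < 1/α + 1/2) (hC₀ : 0 < C₀) :
    ∃ C > 0, ∀ R s : ℝ, 0 < R → s ∈ Set.Ioo (0:ℝ) 1 →
      ∀ p : ℝ → ℝ → ℝ,
      (∀ y ∈ Set.Ioo (-R) R, ∀ x ∈ Set.Ioo (-R) R, 0 ≤ p y x) →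
      (∀ y ∈ Set.Ioo (-R) R, ∀ x ∈ Set.Ioo (-R) R,
        p y x ≤ C₀ * min ((R - x) ^ (α/2) / Real.sqrt s) 1 * s ^ (-(1/α))) →
      (∀ y ∈ Set.Ioo (-R) R, ∀ x ∈ Set.Ioo (-R) R, y ≠ x →
        p y x ≤ C₀ * min ((R - x) ^ (α/2) / Real.sqrt s) 1 * (s / |y - x| ^ (1 + α))) →
      ∀ y ∈ Set.Ioo (-R) R,
        (∫ x in Set.Ioo (-R) R, p y x * (R - x) ^ (-(γ * α)))
          ≤ C * (R - y + s ^ (1/α)) ^ (-(γ * α)) := by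
  have hγα : γ * α < 1 + α / 2 := by
    have := mul_lt_mul_of_pos_right hγ' hα
    rwa [add_mul, one_div_mul_cancel hα.ne', one_div_mul_eq_div] at this
  refine ⟨C₀ * (4 ^ (1 + α) / (1 + α / 2 - γ * α) + 2 ^ (γ * α) * (2 + 2 / α)),
    mul_pos hC₀ (add_pos (div_pos (by positivity) (by linarith)) (by positivity)), ?_⟩
  rintro R s - ⟨hs, -⟩ p hp_nonneg hp_le hp_le' y hy
  have hδ : 0 < R - y := sub_pos.2 hy.2
  obtain ⟨hM_int, hM_le⟩ :=
    boundaryMajorant_integrable_and_integral_le (t := s ^ (1 / α)) hα hγα (by positivity) hδ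
  calc ∫ x in Ioo (-R) R, p y x * (R - x) ^ (-(γ * α))
      ≤ ∫ d, C₀ * boundaryMajorant α γ (s ^ (1 / α)) (R - y) d := by
        refine setIntegral_le_integral_of_ae_le_comp_sub_left (c := R) (hM_int.const_mul C₀)
          (fun d => mul_nonneg hC₀.le (boundaryMajorant_nonneg (by positivity) hδ d)) ?_ ?_
        · filter_upwards [ae_restrict_mem measurableSet_Ioo] with x hx
          exact mul_nonneg (hp_nonneg y hy x hx) (Real.rpow_nonneg (sub_nonneg.2 hx.2.le) _)
        -- at `x = y` the kernel bound is junk (`|0| ^ (1 + α)` in a denominator), hence only a.e.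
        · filter_upwards [ae_restrict_mem measurableSet_Ioo,
            ae_restrict_of_ae (Measure.ae_ne volume y)] with x hx hxy
          exact mul_rpow_le_boundaryMajorant hα hγ.le hC₀.le hs hx.2 hy.2 (hp_le y hy x hx)
            (hp_le' y hy x hx hxy.symm)
    _ ≤ _ := by
        rw [integral_const_mul, mul_assoc]
        gcongr

/-- Lemma 3.4: any kernel dominated by the Dirichlet fractional heat kernel upper bound
satisfies `∫ p(y,x) (R-x)^{-γα} dx ≤ C (R - y + s^{1/α})^{-γα}` for `0 < γ < 1/α + 1/2`. -/
theorem stmt13 (α γ C₀ : ℝ) (hα : 0 < α) (hα' : α < 2)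
    (hγ : 0 < γ) (hγ' : γ < 1/α + 1/2) (hC₀ : 0 < C₀) :
    ∃ C > 0, ∀ R s : ℝ, 0 < R → s ∈ Set.Ioo (0:ℝ) 1 →
      ∀ p : ℝ → ℝ → ℝ,
      (∀ y ∈ Set.Ioo (-R) R, ∀ x ∈ Set.Ioo (-R) R, 0 ≤ p y x) →
      (∀ y ∈ Set.Ioo (-R) R, ∀ x ∈ Set.Ioo (-R) R,
        p y x ≤ C₀ * min ((R - x) ^ (α/2) / Real.sqrt s) 1 * s ^ (-(1/α))) →
      (∀ y ∈ Set.Ioo (-R) R, ∀ x ∈ Set.Ioo (-R) R, y ≠ x →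
        p y x ≤ C₀ * min ((R - x) ^ (α/2) / Real.sqrt s) 1 * (s / |y - x| ^ (1 + α))) →
      ∀ y ∈ Set.Ioo (-R) R,
        (∫ x in Set.Ioo (-R) R, p y x * (R - x) ^ (-(γ * α)))
          ≤ C * (R - y + s ^ (1/α)) ^ (-(γ * α)) :=
  stmt13_general α γ C₀ hα hγ hγ' hC₀
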